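/- arXiv:2409.12546 — 12 statements merged into one kernel-verified Lean document; each statement's English description precedes it below -/
import Mathlib

section
/- Let X, Y be real normed linear spaces, η ∈ [0,1), and T : X → Y a nonzero linear map. If T is B D^η-preserving (i.e., for all x, y ∈ X, x ⊥_B y implies ‖Tx + λTy‖ ≥ √(1 − η²)·‖Tx‖ for all λ ∈ ℝ), then T is bounded: there exists C > 0 with ‖Tx‖ ≤ C‖x‖ for all x ∈ X. -/
/-!
Fix `e` with `T e ≠ 0` and let `x` be arbitrary. Minimising `‖e + σ x‖` over `σ` gives
`u = e + σ x` Birkhoff–James orthogonal to `x`, and the hypothesis (with `λ = -σ`) bounds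
`‖T u‖ ≤ ‖T e‖ / c`, where `c = √(1 - η²)`. If `σ x` is long, `T (σ x) = T u - T e` bounds
`‖T x‖ / ‖x‖`. Otherwise `‖u‖ ≳ ‖e‖`, and a Hahn–Banach functional norming a point
`w = u + r x` of the ray from `u` produces a vector `v` in its kernel, so `w ⊥ v`, with
`T w + λ T v` a multiple of `T u`; this bounds `‖T w‖`, hence `‖T x‖ / ‖x‖`, by `‖T u‖ / ‖u‖`.
-/

open Filter

section BirkhoffOrthogonal

variable {E : Type*} [NormedAddCommGroup E] [NormedSpace ℝ E]

def BirkhoffOrthogonal (x y : E) : Prop :=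
  ∀ l : ℝ, ‖x‖ ≤ ‖x + l • y‖

theorem exists_birkhoffOrthogonal_add_smul (x y : E) :
    ∃ σ : ℝ, BirkhoffOrthogonal (x + σ • y) y := by
  rcases eq_or_ne y 0 with rfl | hy
  · exact ⟨0, fun l => by simp⟩
  have hcoercive : ∀ᶠ σ : ℝ in cocompact ℝ, ‖x + (0 : ℝ) • y‖ ≤ ‖x + σ • y‖ := by
    filter_upwards [tendsto_norm_cocompact_atTop.eventually_ge_atTop (2 * ‖x‖ / ‖y‖)]
      with σ hσ
    have hσy : 2 * ‖x‖ ≤ ‖σ • y‖ := by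
      rwa [norm_smul, ← div_le_iff₀ (norm_pos_iff.2 hy)]
    have := norm_le_norm_sub_add (σ • y) (-x)
    rw [sub_neg_eq_add, add_comm (σ • y), norm_neg] at this
    simp only [zero_smul, add_zero]
    linarith
  obtain ⟨σ, hσ⟩ :=
    (by fun_prop : Continuous fun σ : ℝ => ‖x + σ • y‖).exists_forall_le' 0 hcoercive
  exact ⟨σ, fun l => by simpa only [add_smul, add_assoc] using hσ (σ + l)⟩

theorem birkhoffOrthogonal_of_norming {f : StrongDual ℝ E} (hf : ‖f‖ ≤ 1) {w v : E}
    (hfw : f w = ‖w‖) (hfv : f v = 0) : BirkhoffOrthogonal w v := fun l =>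
  calc ‖w‖ = f (w + l • v) := by simp [hfw, hfv]
    _ ≤ ‖f‖ * ‖w + l • v‖ := (le_abs_self _).trans (f.le_opNorm _)
    _ ≤ ‖w + l • v‖ := mul_le_of_le_one_left (norm_nonneg _) hf

end BirkhoffOrthogonal

section PreservesBirkhoffOrthogonalUpTo

variable {X Y : Type*} [NormedAddCommGroup X] [NormedSpace ℝ X]
  [NormedAddCommGroup Y] [NormedSpace ℝ Y] {T : X →ₗ[ℝ] Y} {c : ℝ}

/-- The paper's `B D^η`-preservation, with `c = √(1 - η²)`. -/
def PreservesBirkhoffOrthogonalUpTo (c : ℝ) (T : X →ₗ[ℝ] Y) : Prop :=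
  ∀ x y : X, BirkhoffOrthogonal x y → ∀ l : ℝ, c * ‖T x‖ ≤ ‖T x + l • T y‖

theorem mul_abs_mul_norm_map_le_of_norming
    (hT : PreservesBirkhoffOrthogonalUpTo c T)
    {f : StrongDual ℝ X} (hf : ‖f‖ ≤ 1) {w : X} (hfw : f w = ‖w‖) (x : X) :
    c * |f x| * ‖T w‖ ≤ ‖w‖ * ‖T x‖ := by
  rcases eq_or_ne (f x) 0 with hx | hx
  · simp only [hx, abs_zero, mul_zero, zero_mul]
    positivity
  have horth : BirkhoffOrthogonal w (f x • w - ‖w‖ • x) :=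
    birkhoffOrthogonal_of_norming hf hfw (by simp [hfw, mul_comm])
  have hcomb : T w + (-(f x)⁻¹) • T (f x • w - ‖w‖ • x) = ((f x)⁻¹ * ‖w‖) • T x := by
    simp only [map_sub, map_smul, smul_sub, smul_smul]
    rw [neg_mul, inv_mul_cancel₀ hx, neg_smul, one_smul, neg_mul, neg_smul]
    abel
  have h := hT w _ horth (-(f x)⁻¹)
  rw [hcomb, norm_smul, Real.norm_eq_abs, abs_mul, abs_inv, abs_norm] at h
  calc c * |f x| * ‖T w‖ = |f x| * (c * ‖T w‖) := by ring
    _ ≤ |f x| * (|f x|⁻¹ * ‖w‖ * ‖T x‖) := by gcongr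
    _ = ‖w‖ * ‖T x‖ := by field_simp

theorem mul_norm_map_le_of_birkhoffOrthogonal
    (hT : PreservesBirkhoffOrthogonalUpTo c T)
    (hc0 : 0 ≤ c) (hc1 : c ≤ 1) {u y : X} (huy : BirkhoffOrthogonal u y) :
    c * ‖u‖ * ‖T y‖ ≤ 8 * ‖y‖ * ‖T u‖ := by
  rcases eq_or_ne u 0 with rfl | hu
  · simp
  rcases eq_or_ne y 0 with rfl | hy
  · simp
  have hu' : 0 < ‖u‖ := norm_pos_iff.2 hu
  have hy' : 0 < ‖y‖ := norm_pos_iff.2 hy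
  -- `u ⊥ y` makes `‖w‖ ≥ 2‖y‖‖u‖`, so a functional norming `w` is at least `‖u‖ / 2` on `u`
  set w : X := (2 * ‖y‖) • u + ‖u‖ • y
  have hw_ge : 2 * ‖y‖ * ‖u‖ ≤ ‖w‖ := by
    have hw : w = (2 * ‖y‖) • (u + (‖u‖ / (2 * ‖y‖)) • y) := by
      rw [smul_add, smul_smul, mul_div_cancel₀ _ (by positivity)]
    rw [hw, norm_smul, Real.norm_of_nonneg (by positivity)]
    gcongr
    exact huy _
  have hw_le : ‖w‖ ≤ 3 * ‖y‖ * ‖u‖ := by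
    calc ‖w‖ ≤ ‖(2 * ‖y‖) • u‖ + ‖‖u‖ • y‖ := norm_add_le _ _
      _ = 3 * ‖y‖ * ‖u‖ := by
        rw [norm_smul, norm_smul, Real.norm_of_nonneg (by positivity), norm_norm]; ring
  obtain ⟨f, hf, hfw⟩ := exists_dual_vector'' ℝ w
  rw [RCLike.ofReal_real_eq_id, id] at hfw
  have hfy : f y ≤ ‖y‖ :=
    (le_abs_self _).trans ((f.le_opNorm y).trans (mul_le_of_le_one_left (norm_nonneg _) hf))
  have hfu : ‖u‖ / 2 ≤ f u := by
    have : f w = 2 * ‖y‖ * f u + ‖u‖ * f y := by simp [w]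
    nlinarith [mul_le_mul_of_nonneg_left hfy hu'.le]
  have hTw : c * ‖T w‖ ≤ 6 * ‖y‖ * ‖T u‖ := by
    have h := mul_abs_mul_norm_map_le_of_norming hT hf hfw u
    rw [abs_of_pos (by linarith)] at h
    refine le_of_mul_le_mul_left ?_ hu'
    calc ‖u‖ * (c * ‖T w‖) ≤ 2 * (c * f u * ‖T w‖) := by
          nlinarith [mul_nonneg hc0 (norm_nonneg (T w))]
      _ ≤ 2 * (‖w‖ * ‖T u‖) := by gcongr
      _ ≤ 2 * (3 * ‖y‖ * ‖u‖ * ‖T u‖) := by gcongr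
      _ = ‖u‖ * (6 * ‖y‖ * ‖T u‖) := by ring
  have hTy : ‖u‖ * ‖T y‖ ≤ ‖T w‖ + 2 * ‖y‖ * ‖T u‖ := by
    have : ‖u‖ • T y = T w - (2 * ‖y‖) • T u := by simp [w]
    calc ‖u‖ * ‖T y‖ = ‖T w - (2 * ‖y‖) • T u‖ := by
          rw [← this, norm_smul, norm_norm]
      _ ≤ ‖T w‖ + 2 * ‖y‖ * ‖T u‖ := (norm_sub_le _ _).trans_eq (by
          rw [norm_smul, Real.norm_of_nonneg (by positivity)])
  calc c * ‖u‖ * ‖T y‖ ≤ c * ‖T w‖ + c * (2 * ‖y‖ * ‖T u‖) := by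
        nlinarith [mul_le_mul_of_nonneg_left hTy hc0]
    _ ≤ 6 * ‖y‖ * ‖T u‖ + 1 * (2 * ‖y‖ * ‖T u‖) := by gcongr
    _ = 8 * ‖y‖ * ‖T u‖ := by ring

theorem sq_mul_norm_map_le
    (hT : PreservesBirkhoffOrthogonalUpTo c T)
    (hc0 : 0 ≤ c) (hc1 : c ≤ 1) (e x : X) :
    c ^ 2 * ‖e‖ * ‖T x‖ ≤ 16 * ‖T e‖ * ‖x‖ := by
  obtain ⟨σ, hσ⟩ := exists_birkhoffOrthogonal_add_smul e x
  set u := e + σ • x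
  have hTu : c * ‖T u‖ ≤ ‖T e‖ := by simpa [u] using hT u x hσ (-σ)
  by_cases hu : ‖e‖ ≤ 2 * ‖u‖
  · have h := mul_norm_map_le_of_birkhoffOrthogonal hT hc0 hc1 hσ
    calc c ^ 2 * ‖e‖ * ‖T x‖ ≤ 2 * c * (c * ‖u‖ * ‖T x‖) := by
          have := mul_le_mul_of_nonneg_left hu (by positivity : 0 ≤ c ^ 2 * ‖T x‖)
          nlinarith
      _ ≤ 2 * c * (8 * ‖x‖ * ‖T u‖) := by gcongr
      _ = 16 * ‖x‖ * (c * ‖T u‖) := by ring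
      _ ≤ 16 * ‖T e‖ * ‖x‖ := by nlinarith [norm_nonneg x]
  · -- otherwise `σ • x = u - e` is long, and `T (σ • x) = T u - T e` is short
    have hσx : ‖e‖ ≤ 2 * (|σ| * ‖x‖) := by
      have := norm_le_norm_sub_add e u
      rw [show e - u = -(σ • x) by simp [u], norm_neg, norm_smul, Real.norm_eq_abs] at this
      linarith
    have hσTx : c * (|σ| * ‖T x‖) ≤ 2 * ‖T e‖ := by
      have := norm_le_norm_sub_add (σ • T x) (T u)
      rw [show σ • T x - T u = -T e by simp [u], norm_neg, norm_smul, Real.norm_eq_abs] at this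
      nlinarith [norm_nonneg (T e)]
    calc c ^ 2 * ‖e‖ * ‖T x‖ ≤ c * ‖e‖ * ‖T x‖ := by
          gcongr
          exact pow_le_of_le_one hc0 hc1 two_ne_zero
      _ ≤ c * (2 * (|σ| * ‖x‖)) * ‖T x‖ := by gcongr
      _ = 2 * ‖x‖ * (c * (|σ| * ‖T x‖)) := by ring
      _ ≤ 2 * ‖x‖ * (2 * ‖T e‖) := by gcongr
      _ ≤ 16 * ‖T e‖ * ‖x‖ := by nlinarith [norm_nonneg x, norm_nonneg (T e)]

end PreservesBirkhoffOrthogonalUpTo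

theorem stmt_2 {X Y : Type*} [NormedAddCommGroup X] [NormedSpace ℝ X]
    [NormedAddCommGroup Y] [NormedSpace ℝ Y]
    (η : ℝ) (hη : 0 ≤ η) (hη1 : η < 1)
    (T : X →ₗ[ℝ] Y) (hT : T ≠ 0)
    (hpres : ∀ x y : X, (∀ l : ℝ, ‖x + l • y‖ ≥ ‖x‖) →
      ∀ l : ℝ, ‖T x + l • T y‖ ≥ Real.sqrt (1 - η ^ 2) * ‖T x‖) :
    ∃ C : ℝ, 0 < C ∧ ∀ x : X, ‖T x‖ ≤ C * ‖x‖ := by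
  set c := Real.sqrt (1 - η ^ 2)
  have hc0 : 0 < c := Real.sqrt_pos.2 (by nlinarith)
  have hc1 : c ≤ 1 := Real.sqrt_le_one.2 (by nlinarith)
  obtain ⟨e, he⟩ : ∃ e, T e ≠ 0 := by
    by_contra! h
    exact hT (LinearMap.ext h)
  have he0 : e ≠ 0 := by
    rintro rfl
    simp at he
  refine ⟨16 * ‖T e‖ / (c ^ 2 * ‖e‖), by positivity, fun x => ?_⟩
  rw [div_mul_eq_mul_div, le_div_iff₀ (by positivity)]
  linarith [sq_mul_norm_map_le hpres hc0.le hc1 e x]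
end

section
/- Let X, Y be real normed linear spaces, η ∈ [0,1), and T : X → Y a nonzero bounded linear operator with ‖T‖ = 1 that is B D^η-preserving. Then T is bounded from below: ‖Tx‖ ≥ (√(1 − η²)/(12 + 3√(1 − η²)))·‖x‖ for all x ∈ X. -/
set_option maxHeartbeats 1000000 in
theorem stmt_3 {X Y : Type*} [NormedAddCommGroup X] [NormedSpace ℝ X]
    [NormedAddCommGroup Y] [NormedSpace ℝ Y]
    (η : ℝ) (hη : 0 ≤ η) (hη1 : η < 1)
    (T : X →L[ℝ] Y) (hTnorm : ‖T‖ = 1)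
    (hpres : ∀ x y : X, (∀ l : ℝ, ‖x + l • y‖ ≥ ‖x‖) →
      ∀ l : ℝ, ‖T x + l • T y‖ ≥ Real.sqrt (1 - η ^ 2) * ‖T x‖) :
    ∀ x : X, ‖T x‖ ≥
      (Real.sqrt (1 - η ^ 2) / (12 + 3 * Real.sqrt (1 - η ^ 2))) * ‖x‖ := by
  set k := Real.sqrt (1 - η ^ 2) with hkdef
  have h1η : 0 < 1 - η ^ 2 := by nlinarith
  have hk0 : 0 < k := Real.sqrt_pos.mpr h1η
  have hk1 : k ≤ 1 := by
    nlinarith [Real.sq_sqrt h1η.le, Real.sqrt_nonneg (1 - η ^ 2), hk0]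
  have hD : (0:ℝ) < 12 + 3 * k := by linarith
  -- main claim for unit vectors
  have main : ∀ x : X, ‖x‖ = 1 → k / (12 + 3 * k) ≤ ‖T x‖ := by
    intro x hx
    by_contra hcon
    push_neg at hcon
    set c := ‖T x‖ with hcdef
    have hc0 : 0 ≤ c := norm_nonneg _
    have h2 : c * (12 + 3 * k) < k := (lt_div_iff₀ hD).mp hcon
    set ε := (6 - 5 * k) / (2 * (12 + 3 * k)) with hεdef
    have hε0 : 0 < ε := by
      apply div_pos (by linarith) (by linarith)
    -- choose y with ‖y‖ < 1 and ‖T y‖ > 1 - ε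
    obtain ⟨y, hy1, hTy⟩ : ∃ y : X, ‖y‖ < 1 ∧ 1 - ε < ‖T y‖ := by
      have hlt : 1 - ε < ‖T‖ := by rw [hTnorm]; linarith
      exact T.exists_lt_apply_of_lt_opNorm hlt
    set v := y - (2:ℝ) • x with hvdef
    have h2x : ‖(2:ℝ) • x‖ = 2 := by
      rw [norm_smul, Real.norm_eq_abs, hx]; norm_num
    have hv1 : 1 ≤ ‖v‖ := by
      have h := norm_sub_norm_le ((2:ℝ) • x) y
      rw [h2x] at h
      rw [hvdef, norm_sub_rev]
      linarith
    have hv3 : ‖v‖ ≤ 3 := by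
      calc ‖v‖ ≤ ‖y‖ + ‖(2:ℝ) • x‖ := norm_sub_le _ _
        _ ≤ 1 + 2 := by rw [h2x]; linarith
        _ = 3 := by norm_num
    -- minimizer over the compact interval
    obtain ⟨μ, hμmem, hμmin⟩ :=
      isCompact_Icc.exists_isMinOn (Set.nonempty_Icc.mpr (by norm_num : (-2:ℝ) ≤ 2))
        ((continuous_norm.comp (by continuity : Continuous fun l : ℝ => x - l • v)).continuousOn)
    have hμmin' : ∀ l ∈ Set.Icc (-2:ℝ) 2, ‖x - μ • v‖ ≤ ‖x - l • v‖ := by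
      intro l hl; exact hμmin hl
    have hμ01 : ‖x - μ • v‖ ≤ 1 := by
      have h0 := hμmin' 0 (by norm_num)
      simpa [hx] using h0
    have hglob : ∀ l : ℝ, ‖x - μ • v‖ ≤ ‖x - l • v‖ := by
      intro l
      by_cases hl : l ∈ Set.Icc (-2:ℝ) 2
      · exact hμmin' l hl
      · have habs : 2 < |l| := by
          rw [Set.mem_Icc] at hl
          rcases abs_cases l with ⟨h, _⟩ | ⟨h, _⟩ <;> rw [h] <;> push_neg at hl <;>
            by_contra hc <;> push_neg at hc <;>
            [exact absurd (hl (by linarith)) (by linarith);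
             exact absurd (hl (by linarith)) (by linarith)]
        have h3 : ‖l • v‖ - ‖x‖ ≤ ‖x - l • v‖ := by
          rw [norm_sub_rev]; exact norm_sub_norm_le _ _
        rw [norm_smul, Real.norm_eq_abs, hx] at h3
        have : (2:ℝ) * 1 ≤ |l| * ‖v‖ :=
          mul_le_mul (le_of_lt habs) hv1 (by norm_num) (abs_nonneg l)
        linarith
    set w := x - μ • v with hwdef
    -- w ⊥_B v
    have horth : ∀ l : ℝ, ‖w + l • v‖ ≥ ‖w‖ := by
      intro l
      have heq : w + l • v = x - (μ - l) • v := by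
        rw [hwdef, sub_smul]; abel
      rw [heq]
      exact hglob (μ - l)
    have hkey := hpres w v horth μ
    -- T w + μ • T v = T x
    have hTx : k * ‖T w‖ ≤ c := by
      have heq : T w + μ • T v = T x := by
        rw [← map_smul, ← map_add]
        congr 1
        rw [hwdef]; abel
      rw [heq] at hkey
      exact hkey
    -- ‖w‖ ≤ 1/2
    have hw12 : ‖w‖ ≤ 1 / 2 := by
      have h := hglob (-(1/2 : ℝ))
      have heq : x - (-(1/2 : ℝ)) • v = (1/2 : ℝ) • y := by
        rw [hvdef]; module
      rw [heq, norm_smul, Real.norm_eq_abs] at h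
      have habs : |(1/2 : ℝ)| = 1/2 := by norm_num
      rw [habs] at h
      rw [hwdef]
      linarith
    -- |μ| ≥ 1/6
    have hμ6 : 1 / 6 ≤ |μ| := by
      have h3 : ‖x‖ - ‖μ • v‖ ≤ ‖x - μ • v‖ := norm_sub_norm_le _ _
      rw [norm_smul, Real.norm_eq_abs, hx, ← hwdef] at h3
      have hp : |μ| * ‖v‖ ≤ |μ| * 3 := mul_le_mul_of_nonneg_left hv3 (abs_nonneg μ)
      linarith
    -- lower bound on ‖T v‖
    have hTv : 1 - ε - 2 * c ≤ ‖T v‖ := by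
      have heq : T v = T y - (2:ℝ) • T x := by
        rw [hvdef, map_sub, map_smul]
      rw [heq]
      have h3 := norm_sub_norm_le (T y) ((2:ℝ) • T x)
      rw [norm_smul, Real.norm_eq_abs] at h3
      have habs : |(2 : ℝ)| = 2 := by norm_num
      rw [habs] at h3
      linarith
    have hTvnn : 0 ≤ ‖T v‖ := norm_nonneg _
    -- lower bound on ‖T w‖
    have hTw : |μ| * ‖T v‖ - c ≤ ‖T w‖ := by
      have heq : T w = T x - μ • T v := by
        rw [hwdef, map_sub, map_smul]
      rw [heq]
      have h3 : ‖μ • T v‖ - ‖T x‖ ≤ ‖T x - μ • T v‖ := by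
        rw [norm_sub_rev]; exact norm_sub_norm_le _ _
      rw [norm_smul, Real.norm_eq_abs] at h3
      exact h3
    have hstep : (1/6 : ℝ) * ‖T v‖ ≤ |μ| * ‖T v‖ :=
      mul_le_mul_of_nonneg_right hμ6 hTvnn
    have hTw2 : (1/6 : ℝ) * (1 - ε - 2 * c) - c ≤ ‖T w‖ := by nlinarith
    have hq : k * (1 - ε) ≤ c * (6 + 8 * k) := by
      have h4 : k * ((1/6 : ℝ) * (1 - ε - 2 * c) - c) ≤ k * ‖T w‖ :=
        mul_le_mul_of_nonneg_left hTw2 hk0.le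
      nlinarith
    -- contradiction
    have hεval : ε * (2 * (12 + 3 * k)) = 6 - 5 * k := by
      rw [hεdef]; field_simp
    nlinarith [mul_lt_mul_of_pos_left h2 (show (0:ℝ) < 2 * (6 + 8 * k) by linarith),
      mul_pos hk0 hk0, hq, hεval, hk0, hk1]
  -- deduce the general statement by scaling
  intro x
  rcases eq_or_ne x 0 with rfl | hx0
  · simp
  · have hxn : 0 < ‖x‖ := norm_pos_iff.mpr hx0
    have hu : ‖(‖x‖⁻¹ : ℝ) • x‖ = 1 := by
      rw [norm_smul, Real.norm_eq_abs, abs_of_pos (inv_pos.mpr hxn)]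
      field_simp
    have h := main ((‖x‖⁻¹ : ℝ) • x) hu
    rw [map_smul, norm_smul, Real.norm_eq_abs, abs_of_pos (inv_pos.mpr hxn)] at h
    rw [ge_iff_le]
    calc k / (12 + 3 * k) * ‖x‖ ≤ ‖x‖⁻¹ * ‖T x‖ * ‖x‖ :=
          mul_le_mul_of_nonneg_right h hxn.le
      _ = ‖T x‖ := by field_simp
end

section
/- Let X, Y be real normed linear spaces, η ∈ [0,1), and T : X → Y a nonzero B D^η-preserving linear operator. Then T is injective. -/
theorem stmt_4 {X Y : Type*} [NormedAddCommGroup X] [NormedSpace ℝ X]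
    [NormedAddCommGroup Y] [NormedSpace ℝ Y]
    (η : ℝ) (hη : 0 ≤ η) (hη1 : η < 1)
    (T : X →ₗ[ℝ] Y) (hT : T ≠ 0)
    (hpres : ∀ x y : X, (∀ l : ℝ, ‖x + l • y‖ ≥ ‖x‖) →
      ∀ l : ℝ, ‖T x + l • T y‖ ≥ Real.sqrt (1 - η ^ 2) * ‖T x‖) :
    Function.Injective T := by
  intro a b hab
  rw [← sub_eq_zero]
  by_contra hz
  set z := a - b with hzdef
  have hTz : T z = 0 := by simp [hzdef, map_sub, hab]
  obtain ⟨u, hu⟩ : ∃ u, T u ≠ 0 := by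
    by_contra h
    push_neg at h
    exact hT (LinearMap.ext fun x => h x)
  have hu0 : u ≠ 0 := fun h => hu (by simp [h])
  have hzn : (0:ℝ) < ‖z‖ := norm_pos_iff.2 hz
  have hun : (0:ℝ) < ‖u‖ := norm_pos_iff.2 hu0
  set t : ℝ := ‖z‖ / (2 * ‖u‖) with ht
  have htpos : 0 < t := div_pos hzn (by linarith)
  set v : X := u - (1 / t) • z with hv
  have hTv : T v = T u := by simp [hv, map_sub, map_smul, hTz]
  have hv0 : v ≠ 0 := fun h => hu (by rw [← hTv, h, map_zero])
  have hvn : (0:ℝ) < ‖v‖ := norm_pos_iff.2 hv0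
  -- key point: z + t • v = t • u has small norm
  have hkey : ‖z + t • v‖ < ‖z‖ := by
    have : z + t • v = t • u := by
      rw [hv, smul_sub, smul_smul]
      rw [mul_one_div, div_self htpos.ne', one_smul]
      abel
    rw [this, norm_smul, Real.norm_eq_abs, abs_of_pos htpos, ht]
    rw [div_mul_eq_mul_div, mul_comm]
    rw [mul_comm (2:ℝ) ‖u‖, ← div_div]
    have : ‖u‖ * ‖z‖ / ‖u‖ = ‖z‖ := by field_simp
    rw [this]
    linarith
  -- minimize f r = ‖z + r • v‖ on a compact interval, then globally
  set R : ℝ := 2 * ‖z‖ / ‖v‖ with hR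
  have hR0 : 0 ≤ R := div_nonneg (by positivity) hvn.le
  have hcompact : IsCompact (Set.Icc (-R) R) := isCompact_Icc
  have hne : (Set.Icc (-R) R).Nonempty := ⟨0, by constructor <;> linarith⟩
  have hcont : ContinuousOn (fun r : ℝ => ‖z + r • v‖) (Set.Icc (-R) R) := by
    fun_prop
  obtain ⟨r₀, hr₀mem, hr₀min⟩ := hcompact.exists_isMinOn hne hcont
  have hglob : ∀ r : ℝ, ‖z + r₀ • v‖ ≤ ‖z + r • v‖ := by
    intro r
    by_cases hr : r ∈ Set.Icc (-R) R
    · exact hr₀min hr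
    · have habs : R < |r| := by
        simp only [Set.mem_Icc, not_and_or, not_le] at hr
        rcases hr with h | h
        · rw [abs_of_neg (by linarith)]; linarith
        · rw [abs_of_pos (by linarith)]; exact h
      have h1 : ‖z + r₀ • v‖ ≤ ‖z‖ := by
        have := hr₀min (Set.mem_Icc.2 ⟨by linarith, by linarith⟩ : (0:ℝ) ∈ Set.Icc (-R) R)
        simpa using this
      have h2 : ‖z‖ ≤ ‖z + r • v‖ := by
        have h3 : |r| * ‖v‖ - ‖z‖ ≤ ‖z + r • v‖ := by
          have h4 : ‖(z + r • v) - z‖ = |r| * ‖v‖ := by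
            simp [norm_smul, Real.norm_eq_abs]
          have h5 := norm_sub_le (z + r • v) z
          linarith [h4 ▸ h5]
        have h5 : 2 * ‖z‖ < |r| * ‖v‖ := by
          have := (div_lt_iff₀ hvn).1 habs
          linarith [this]
        linarith
      linarith
  set x : X := z + r₀ • v with hx
  -- x is Birkhoff-orthogonal to z - x
  have hperp : ∀ l : ℝ, ‖x + l • (z - x)‖ ≥ ‖x‖ := by
    intro l
    have : x + l • (z - x) = z + ((1 - l) * r₀) • v := by
      rw [hx]
      module
    rw [this]
    exact hglob _
  have h1 := hpres x (z - x) hperp 1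
  have hTx : T x = r₀ • T u := by
    rw [hx, map_add, map_smul, hTz, hTv, zero_add]
  have hlhs : T x + (1:ℝ) • T (z - x) = 0 := by
    rw [map_sub, hTz, one_smul]
    abel
  rw [hlhs, norm_zero] at h1
  have hsq : 0 < Real.sqrt (1 - η ^ 2) := by
    apply Real.sqrt_pos.2
    nlinarith
  have hTx0 : T x = 0 := by
    by_contra h
    have : 0 < ‖T x‖ := norm_pos_iff.2 h
    nlinarith
  -- but r₀ ≠ 0 since min value < ‖z‖
  have hr₀ne : r₀ ≠ 0 := by
    intro h
    have hx' : ‖x‖ ≤ ‖z + t • v‖ := hglob t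
    rw [hx, h, zero_smul, add_zero] at hx'
    linarith
  rw [hTx, smul_eq_zero] at hTx0
  rcases hTx0 with h | h
  · exact hr₀ne h
  · exact hu h
end

section
/- Let X, Y be real normed linear spaces and η ∈ [0,1). Let T : X → Y be a bounded linear operator with ‖T‖ = 1, and suppose T is I D^η-preserving, i.e., for all x, y ∈ X with ‖x + y‖ = ‖x − y‖, we have ‖T x + λ T y‖ ≥ √(1 − η²)‖Tx‖ for all λ ∈ ℝ. Then T is injective. -/
theorem stmt_5 {X Y : Type*} [NormedAddCommGroup X] [NormedSpace ℝ X]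
    [NormedAddCommGroup Y] [NormedSpace ℝ Y]
    (η : ℝ) (hη : 0 ≤ η) (hη1 : η < 1)
    (T : X →L[ℝ] Y) (hTnorm : ‖T‖ = 1)
    (hpres : ∀ x y : X, ‖x + y‖ = ‖x - y‖ →
      ∀ l : ℝ, ‖T x + l • T y‖ ≥ Real.sqrt (1 - η ^ 2) * ‖T x‖) :
    Function.Injective T := by
  have hc : 0 < Real.sqrt (1 - η ^ 2) := by
    apply Real.sqrt_pos.mpr
    nlinarith
  intro a b hab
  by_contra hne
  set z := a - b with hz
  have hzne : z ≠ 0 := sub_ne_zero.mpr hne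
  have hTz : T z = 0 := by simp [hz, map_sub, hab]
  -- T kills every vector of norm ‖z‖, hence every vector
  have key : ∀ u : X, ‖u‖ = ‖z‖ → T u = 0 := by
    intro u hu
    have hsum : ‖((1:ℝ)/2) • (u + z) + ((1:ℝ)/2) • (u - z)‖ =
        ‖((1:ℝ)/2) • (u + z) - ((1:ℝ)/2) • (u - z)‖ := by
      rw [← smul_add, ← smul_sub]
      have h1 : (u + z) + (u - z) = (2:ℝ) • u := by
        rw [two_smul]; abel
      have h2 : (u + z) - (u - z) = (2:ℝ) • z := by
        rw [two_smul]; abel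
      rw [h1, h2, smul_smul, smul_smul]
      norm_num [hu]
    have := hpres _ _ hsum (-1)
    have hTy : T (((1:ℝ)/2) • (u - z)) = ((1:ℝ)/2) • T u := by
      rw [map_smul, map_sub, hTz, sub_zero]
    have hTx : T (((1:ℝ)/2) • (u + z)) = ((1:ℝ)/2) • T u := by
      rw [map_smul, map_add, hTz, add_zero]
    rw [hTx, hTy] at this
    simp only [neg_one_smul, add_neg_cancel, norm_zero] at this
    have hnorm0 : ‖((1:ℝ)/2) • T u‖ = 0 := by
      nlinarith [norm_nonneg (((1:ℝ)/2) • T u)]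
    have : ((1:ℝ)/2) • T u = 0 := norm_eq_zero.mp hnorm0
    have := congrArg (fun v => (2:ℝ) • v) this
    simpa [smul_smul] using this
  have hT0 : ∀ u : X, T u = 0 := by
    intro u
    rcases eq_or_ne u 0 with rfl | hu
    · simp
    · have hun : ‖u‖ ≠ 0 := norm_ne_zero_iff.mpr hu
      have h := key ((‖z‖ / ‖u‖) • u) (by
        rw [norm_smul, Real.norm_eq_abs, abs_of_nonneg (by positivity)]
        field_simp)
      rw [map_smul] at h
      have hzn : ‖z‖ ≠ 0 := norm_ne_zero_iff.mpr hzne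
      have hs : (‖z‖ / ‖u‖) ≠ 0 := div_ne_zero hzn hun
      exact (smul_eq_zero.mp h).resolve_left hs
  have : ‖T‖ = 0 := by
    apply le_antisymm _ (norm_nonneg _)
    apply ContinuousLinearMap.opNorm_le_bound _ le_rfl
    intro x; simp [hT0 x]
  rw [hTnorm] at this
  norm_num at this
end

section
/- In the real space ℓ₁² (ℝ² with the ℓ¹ norm), for the vector x = (3/4, −1/4) there is no nonzero y ∈ ℓ₁² with x Roberts-orthogonal to y, i.e., with ‖x + λy‖ = ‖x − λy‖ for all λ ∈ ℝ. Hence Roberts orthogonality fails the existence property in general normed spaces. -/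
/-!
Write `x = (p, q)` with `0 < |q| < |p|` and `y = (a, b) ≠ 0`. If `a ≠ 0`, the scalar `λ = p / a`
kills the first coordinate of `x - λ y`, and the norm identity becomes
`2|p| + |q + t| = |q - t|` with `t = λ b`, impossible since `|q - t| ≤ |q + t| + 2|q|`.
If `a = 0`, then `b ≠ 0` and `λ = q / b` gives `|p| + 2|q| = |p|`, impossible since `q ≠ 0`.
-/

def RobertsOrthogonal {E : Type*} [SeminormedAddCommGroup E] [Module ℝ E] (x y : E) : Prop :=
  ∀ l : ℝ, ‖x + l • y‖ = ‖x - l • y‖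

lemma PiLp.norm_fin_two_of_L1 (v : PiLp 1 (fun _ : Fin 2 => ℝ)) : ‖v‖ = |v 0| + |v 1| := by
  simp [PiLp.norm_eq_of_L1, Fin.sum_univ_two, Real.norm_eq_abs]

lemma robertsOrthogonal_L1_fin_two_iff (x y : PiLp 1 (fun _ : Fin 2 => ℝ)) :
    RobertsOrthogonal x y ↔ ∀ l : ℝ,
      |x 0 + l * y 0| + |x 1 + l * y 1| = |x 0 - l * y 0| + |x 1 - l * y 1| := by
  simp [RobertsOrthogonal, PiLp.norm_fin_two_of_L1]

lemma abs_sub_le_abs_add_add_two_mul_abs (q t : ℝ) : |q - t| ≤ |q + t| + 2 * |q| :=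
  calc |q - t| = |2 * q - (q + t)| := by ring_nf
    _ ≤ |2 * q| + |q + t| := abs_sub _ _
    _ = |q + t| + 2 * |q| := by rw [abs_mul, abs_two, add_comm]

lemma exists_abs_add_ne_of_ne_zero {p q a b : ℝ} (hpq : |q| < |p|) (ha : a ≠ 0) :
    ∃ l : ℝ, |p + l * a| + |q + l * b| ≠ |p - l * a| + |q - l * b| := by
  refine ⟨p / a, fun h => ?_⟩
  rw [div_mul_cancel₀ p ha, sub_self, abs_zero, zero_add, ← two_mul, abs_mul, abs_two] at h
  linarith [abs_sub_le_abs_add_add_two_mul_abs q (p / a * b)]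

lemma exists_abs_add_ne {q b : ℝ} (hq : q ≠ 0) (hb : b ≠ 0) :
    ∃ l : ℝ, |q + l * b| ≠ |q - l * b| := by
  refine ⟨q / b, fun h => ?_⟩
  rw [div_mul_cancel₀ q hb, sub_self, abs_zero, ← two_mul] at h
  exact hq (by simpa using h)

theorem not_robertsOrthogonal_L1_fin_two {x y : PiLp 1 (fun _ : Fin 2 => ℝ)} (hx1 : x 1 ≠ 0)
    (hx : |x 1| < |x 0|) (hy : y ≠ 0) : ¬ RobertsOrthogonal x y := by
  rw [robertsOrthogonal_L1_fin_two_iff, not_forall]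
  by_cases hy0 : y 0 = 0
  · have hy1 : y 1 ≠ 0 := fun hy1 => hy (by ext i; fin_cases i <;> simpa)
    obtain ⟨l, hl⟩ := exists_abs_add_ne hx1 hy1
    exact ⟨l, by simpa [hy0] using hl⟩
  · exact exists_abs_add_ne_of_ne_zero hx hy0

theorem stmt_6 :
    ∀ y : PiLp 1 (fun _ : Fin 2 => ℝ), y ≠ 0 →
      ¬ (∀ l : ℝ,
        ‖(WithLp.equiv 1 (Fin 2 → ℝ)).symm ![3/4, -1/4] + l • y‖ =
        ‖(WithLp.equiv 1 (Fin 2 → ℝ)).symm ![3/4, -1/4] - l • y‖) :=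
  fun _ hy => not_robertsOrthogonal_L1_fin_two (by simp) (by norm_num [abs_of_neg]) hy
end

section
/- Let X, Y be real normed linear spaces, β ∈ [0,1), and let T : X → Y be a nonzero linear map of the form T = αU with α ≠ 0 and (1 − δ₁)‖x‖ ≤ ‖Ux‖ ≤ (1 + δ₂)‖x‖ for all x, where 0 ≤ δ₁ < 1 and δ₂ ≥ 0. Then for all x, y ∈ X with x ⊥_{D^β} y, we have Tx ⊥_{D^η} Ty, where η = √(1 − ((1 − δ₁)/(1 + δ₂))²·(1 − β²)). -/
set_option maxHeartbeats 1000000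

theorem stmt_8 {X Y : Type*} [NormedAddCommGroup X] [NormedSpace ℝ X]
    [NormedAddCommGroup Y] [NormedSpace ℝ Y]
    (β δ₁ δ₂ : ℝ) (hβ0 : 0 ≤ β) (hβ1 : β < 1)
    (hδ₁0 : 0 ≤ δ₁) (hδ₁1 : δ₁ < 1) (hδ₂ : 0 ≤ δ₂)
    (T U : X →ₗ[ℝ] Y) (α : ℝ) (hα : α ≠ 0) (hTU : T = α • U)
    (hU : ∀ x : X, (1 - δ₁) * ‖x‖ ≤ ‖U x‖ ∧ ‖U x‖ ≤ (1 + δ₂) * ‖x‖) :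
    ∀ x y : X, (∀ l : ℝ, ‖x + l • y‖ ≥ Real.sqrt (1 - β ^ 2) * ‖x‖) →
      ∀ l : ℝ, ‖T x + l • T y‖ ≥
        Real.sqrt (1 - Real.sqrt (1 - ((1 - δ₁) / (1 + δ₂)) ^ 2 * (1 - β ^ 2)) ^ 2)
          * ‖T x‖ := by
  intro x y hxy l
  set c : ℝ := (1 - δ₁) / (1 + δ₂) with hc
  have h1δ₂ : (0:ℝ) < 1 + δ₂ := by linarith
  have hc0 : 0 ≤ c := div_nonneg (by linarith) h1δ₂.le
  have hc1 : c ≤ 1 := by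
    rw [hc, div_le_one h1δ₂]; linarith
  have hβsq : 0 ≤ 1 - β ^ 2 := by nlinarith
  have hβsq1 : 1 - β ^ 2 ≤ 1 := by nlinarith
  have hprod : c ^ 2 * (1 - β ^ 2) ≤ 1 := by nlinarith
  have hprod0 : 0 ≤ c ^ 2 * (1 - β ^ 2) := by positivity
  have hsq : Real.sqrt (1 - c ^ 2 * (1 - β ^ 2)) ^ 2 = 1 - c ^ 2 * (1 - β ^ 2) :=
    Real.sq_sqrt (by linarith)
  rw [hsq]
  have hsimp : (1 : ℝ) - (1 - c ^ 2 * (1 - β ^ 2)) = c ^ 2 * (1 - β ^ 2) := by ring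
  rw [hsimp]
  have hsqrt : Real.sqrt (c ^ 2 * (1 - β ^ 2)) = c * Real.sqrt (1 - β ^ 2) := by
    rw [Real.sqrt_mul (by positivity), Real.sqrt_sq hc0]
  rw [hsqrt]
  -- rewrite T
  have hT : ∀ z : X, T z = α • U z := by intro z; rw [hTU]; rfl
  have hTnorm : ∀ z : X, ‖T z‖ = |α| * ‖U z‖ := by
    intro z; rw [hT, norm_smul, Real.norm_eq_abs]
  have key : T x + l • T y = α • U (x + l • y) := by
    rw [hT, hT, map_add, map_smul, smul_add, smul_comm]
  rw [key, norm_smul, Real.norm_eq_abs]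
  have hlow : (1 - δ₁) * ‖x + l • y‖ ≤ ‖U (x + l • y)‖ := (hU _).1
  have hmid : Real.sqrt (1 - β ^ 2) * ‖x‖ ≤ ‖x + l • y‖ := hxy l
  have hupp : ‖U x‖ ≤ (1 + δ₂) * ‖x‖ := (hU x).2
  have hα0 : 0 < |α| := abs_pos.mpr hα
  rw [hTnorm]
  have hcval : c * (1 + δ₂) = 1 - δ₁ := div_mul_cancel₀ _ h1δ₂.ne'
  have step1 : c * Real.sqrt (1 - β ^ 2) * (|α| * ‖U x‖)
      ≤ |α| * ((1 - δ₁) * (Real.sqrt (1 - β ^ 2) * ‖x‖)) := by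
    have : c * Real.sqrt (1 - β ^ 2) * ‖U x‖ ≤ (1 - δ₁) * (Real.sqrt (1 - β ^ 2) * ‖x‖) := by
      calc c * Real.sqrt (1 - β ^ 2) * ‖U x‖
          ≤ c * Real.sqrt (1 - β ^ 2) * ((1 + δ₂) * ‖x‖) := by
            apply mul_le_mul_of_nonneg_left hupp (by positivity)
        _ = (1 - δ₁) * (Real.sqrt (1 - β ^ 2) * ‖x‖) := by
            rw [← hcval]; ring
    nlinarith [this, hα0.le]
  have step2 : (1 - δ₁) * (Real.sqrt (1 - β ^ 2) * ‖x‖) ≤ ‖U (x + l • y)‖ :=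
    le_trans (by nlinarith) hlow
  calc c * Real.sqrt (1 - β ^ 2) * (|α| * ‖U x‖)
      ≤ |α| * ((1 - δ₁) * (Real.sqrt (1 - β ^ 2) * ‖x‖)) := step1
    _ ≤ |α| * ‖U (x + l • y)‖ := by
        apply mul_le_mul_of_nonneg_left step2 hα0.le
end

section
/- Let X, Y be real normed linear spaces and β ∈ [0, 1/2). Let T = αU with α ≠ 0 and (1 − δ₁)‖x‖ ≤ ‖Ux‖ ≤ (1 + δ₂)‖x‖ for all x ∈ X (0 ≤ δ₁ < 1, δ₂ ≥ 0). Assume that x ⊥_{B^β} y implies ‖x + λy‖ ≥ (1 − 2β)‖x‖ for all λ ∈ ℝ. Then x ⊥_{B^β} y implies Tx ⊥_{D^η} Ty with η = √(1 − ((1 − δ₁)/(1 + δ₂))²·(1 − 2β)²). -/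
theorem stmt_9 {X Y : Type*} [NormedAddCommGroup X] [NormedSpace ℝ X]
    [NormedAddCommGroup Y] [NormedSpace ℝ Y]
    (β δ₁ δ₂ : ℝ) (hβ0 : 0 ≤ β) (hβ1 : β < 1/2)
    (hδ₁0 : 0 ≤ δ₁) (hδ₁1 : δ₁ < 1) (hδ₂ : 0 ≤ δ₂)
    (T U : X →ₗ[ℝ] Y) (α : ℝ) (hα : α ≠ 0) (hTU : T = α • U)
    (hU : ∀ x : X, (1 - δ₁) * ‖x‖ ≤ ‖U x‖ ∧ ‖U x‖ ≤ (1 + δ₂) * ‖x‖)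
    (himp : ∀ x y : X,
      (∀ l : ℝ, ‖x + l • y‖ ^ 2 ≥ ‖x‖ ^ 2 - 2 * β * ‖x‖ * ‖l • y‖) →
      ∀ l : ℝ, ‖x + l • y‖ ≥ (1 - 2 * β) * ‖x‖) :
    ∀ x y : X, (∀ l : ℝ, ‖x + l • y‖ ^ 2 ≥ ‖x‖ ^ 2 - 2 * β * ‖x‖ * ‖l • y‖) →
      ∀ l : ℝ, ‖T x + l • T y‖ ≥
        Real.sqrt (1 - Real.sqrt (1 - ((1 - δ₁) / (1 + δ₂)) ^ 2 * (1 - 2 * β) ^ 2) ^ 2)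
          * ‖T x‖ := by
  intro x y hB l
  have h1δ₂ : (0:ℝ) < 1 + δ₂ := by linarith
  set c : ℝ := ((1 - δ₁) / (1 + δ₂)) ^ 2 * (1 - 2 * β) ^ 2 with hc
  have hd : 0 ≤ (1 - δ₁) / (1 + δ₂) := div_nonneg (by linarith) (le_of_lt h1δ₂)
  have hd1 : (1 - δ₁) / (1 + δ₂) ≤ 1 := by
    rw [div_le_one h1δ₂]; linarith
  have hb1 : (0:ℝ) ≤ 1 - 2 * β := by linarith
  have hb2 : (1:ℝ) - 2 * β ≤ 1 := by linarith
  have hc0 : 0 ≤ c := by positivity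
  have hc1 : c ≤ 1 := by
    calc c ≤ 1 * 1 := by
            apply mul_le_mul _ _ (by positivity) (by norm_num)
            · exact pow_le_one₀ hd hd1
            · exact pow_le_one₀ hb1 hb2
      _ = 1 := by ring
  have hsq : Real.sqrt (1 - c) ^ 2 = 1 - c := Real.sq_sqrt (by linarith)
  have hcoef : Real.sqrt (1 - Real.sqrt (1 - c) ^ 2) = (1 - δ₁) / (1 + δ₂) * (1 - 2 * β) := by
    rw [hsq]
    have : 1 - (1 - c) = c := by ring
    rw [this, hc, ← mul_pow]
    exact Real.sqrt_sq (by positivity)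
  rw [hcoef]
  have hTv : ∀ v : X, ‖T v‖ = |α| * ‖U v‖ := by
    intro v; rw [hTU]; simp [norm_smul]
  have hlin : T x + l • T y = T (x + l • y) := by simp
  rw [hlin, hTv, hTv]
  have h1 : (1 - δ₁) * ‖x + l • y‖ ≤ ‖U (x + l • y)‖ := (hU _).1
  have h2 : ‖U x‖ ≤ (1 + δ₂) * ‖x‖ := (hU x).2
  have h3 : (1 - 2 * β) * ‖x‖ ≤ ‖x + l • y‖ := himp x y hB l
  have hα0 : 0 < |α| := abs_pos.mpr hα
  rw [ge_iff_le]
  calc (1 - δ₁) / (1 + δ₂) * (1 - 2 * β) * (|α| * ‖U x‖)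
      ≤ (1 - δ₁) / (1 + δ₂) * (1 - 2 * β) * (|α| * ((1 + δ₂) * ‖x‖)) := by
        apply mul_le_mul_of_nonneg_left _ (by positivity)
        exact mul_le_mul_of_nonneg_left h2 (le_of_lt hα0)
    _ = |α| * ((1 - δ₁) * ((1 - 2 * β) * ‖x‖)) := by
        field_simp
    _ ≤ |α| * ((1 - δ₁) * ‖x + l • y‖) := by
        apply mul_le_mul_of_nonneg_left _ (le_of_lt hα0)
        exact mul_le_mul_of_nonneg_left h3 (by linarith)
    _ ≤ |α| * ‖U (x + l • y)‖ := mul_le_mul_of_nonneg_left h1 (le_of_lt hα0)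
end

section
/- Let X, Y be real normed linear spaces. Let T : X → Y be a linear map of the form T = αU with α ≠ 0, where (1 − δ₁)‖x‖ ≤ ‖Ux‖ ≤ (1 + δ₂)‖x‖ for all x ∈ X (0 ≤ δ₁ < 1, δ₂ ≥ 0). If x ⊥_R y (Roberts orthogonality), then both Tx ⊥_{D^η} Ty and Ty ⊥_{D^η} Tx hold for η = √(1 − ((1 − δ₁)/(1 + δ₂))²). -/
theorem stmt_10 {X Y : Type*} [NormedAddCommGroup X] [NormedSpace ℝ X]
    [NormedAddCommGroup Y] [NormedSpace ℝ Y]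
    (δ₁ δ₂ : ℝ) (hδ₁0 : 0 ≤ δ₁) (hδ₁1 : δ₁ < 1) (hδ₂ : 0 ≤ δ₂)
    (T U : X →ₗ[ℝ] Y) (α : ℝ) (hα : α ≠ 0) (hTU : T = α • U)
    (hU : ∀ x : X, (1 - δ₁) * ‖x‖ ≤ ‖U x‖ ∧ ‖U x‖ ≤ (1 + δ₂) * ‖x‖) :
    ∀ x y : X, (∀ l : ℝ, ‖x + l • y‖ = ‖x - l • y‖) →
      (∀ l : ℝ, ‖T x + l • T y‖ ≥
        Real.sqrt (1 - Real.sqrt (1 - ((1 - δ₁) / (1 + δ₂)) ^ 2) ^ 2) * ‖T x‖) ∧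
      (∀ l : ℝ, ‖T y + l • T x‖ ≥
        Real.sqrt (1 - Real.sqrt (1 - ((1 - δ₁) / (1 + δ₂)) ^ 2) ^ 2) * ‖T y‖) := by
  intro x y hxy
  set k := (1 - δ₁) / (1 + δ₂) with hk
  have h1δ₂ : (0:ℝ) < 1 + δ₂ := by linarith
  have hk0 : 0 ≤ k := div_nonneg (by linarith) h1δ₂.le
  have hk1 : k ≤ 1 := by rw [hk, div_le_one h1δ₂]; linarith
  have hkmul : k * (1 + δ₂) = 1 - δ₁ := div_mul_cancel₀ _ h1δ₂.ne'
  have hsq : Real.sqrt (1 - Real.sqrt (1 - k ^ 2) ^ 2) = k := by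
    rw [Real.sq_sqrt (by nlinarith : (0:ℝ) ≤ 1 - k ^ 2)]
    have : 1 - (1 - k ^ 2) = k ^ 2 := by ring
    rw [this, Real.sqrt_sq hk0]
  rw [hsq]
  have hα' : (0:ℝ) < |α| := abs_pos.mpr hα
  -- key estimate
  have key : ∀ u v : X, (∀ l : ℝ, ‖u + l • v‖ ≥ ‖u‖) →
      ∀ l : ℝ, ‖T u + l • T v‖ ≥ k * ‖T u‖ := by
    intro u v h l
    have hT : T u + l • T v = T (u + l • v) := by simp [map_add, map_smul]
    rw [hT, hTU]
    simp only [LinearMap.smul_apply]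
    rw [norm_smul, norm_smul, Real.norm_eq_abs]
    have h1 := (hU (u + l • v)).1
    have h2 := (hU u).2
    have h3 := h l
    have hnu : (0:ℝ) ≤ ‖u‖ := norm_nonneg u
    have hδ : (0:ℝ) ≤ 1 - δ₁ := by linarith
    calc k * (|α| * ‖U u‖)
        ≤ k * (|α| * ((1 + δ₂) * ‖u‖)) := by
          exact mul_le_mul_of_nonneg_left (mul_le_mul_of_nonneg_left h2 hα'.le) hk0
      _ = |α| * ((k * (1 + δ₂)) * ‖u‖) := by ring
      _ = |α| * ((1 - δ₁) * ‖u‖) := by rw [hkmul]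
      _ ≤ |α| * ((1 - δ₁) * ‖u + l • v‖) :=
          mul_le_mul_of_nonneg_left (mul_le_mul_of_nonneg_left h3 hδ) hα'.le
      _ ≤ |α| * ‖U (u + l • v)‖ := mul_le_mul_of_nonneg_left h1 hα'.le
  -- Roberts consequences
  have hx : ∀ l : ℝ, ‖x + l • y‖ ≥ ‖x‖ := by
    intro l
    have h2x : (2:ℝ) • x = (x + l • y) + (x - l • y) := by module
    have := norm_add_le (x + l • y) (x - l • y)
    rw [← h2x, norm_smul] at this
    have hr := hxy l
    simp [Real.norm_eq_abs] at this
    linarith [this, hr.symm ▸ this]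
  have hy : ∀ l : ℝ, ‖y + l • x‖ ≥ ‖y‖ := by
    intro l
    rcases eq_or_ne l 0 with hl | hl
    · simp [hl]
    have hsym : ‖y + l • x‖ = ‖y - l • x‖ := by
      have e1 : l • (x + l⁻¹ • y) = l • x + y := by
        rw [smul_add, smul_inv_smul₀ hl]
      have e2 : l • (x - l⁻¹ • y) = l • x - y := by
        rw [smul_sub, smul_inv_smul₀ hl]
      calc ‖y + l • x‖ = ‖l • (x + l⁻¹ • y)‖ := by rw [e1, add_comm]
        _ = |l| * ‖x + l⁻¹ • y‖ := by rw [norm_smul, Real.norm_eq_abs]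
        _ = |l| * ‖x - l⁻¹ • y‖ := by rw [hxy]
        _ = ‖l • (x - l⁻¹ • y)‖ := by rw [norm_smul, Real.norm_eq_abs]
        _ = ‖l • x - y‖ := by rw [e2]
        _ = ‖y - l • x‖ := norm_sub_rev _ _
    have h2y : (2:ℝ) • y = (y + l • x) + (y - l • x) := by module
    have := norm_add_le (y + l • x) (y - l • x)
    rw [← h2y, norm_smul] at this
    simp [Real.norm_eq_abs] at this
    linarith [hsym ▸ this]
  exact ⟨key x y hx, key y x hy⟩
end

section
/- Let X, Y be real normed linear spaces, β ∈ [0,1), and suppose S : X → Y is a linear map satisfying c‖x‖ ≤ ‖Sx‖ ≤ C‖x‖ for all x ∈ X with 0 < c ≤ C. Then x ⊥_{D^β} y implies Sx ⊥_{D^η} Sy, where η = √(1 − (c/C)²(1 − β²)). -/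
theorem stmt_12 {X Y : Type*} [NormedAddCommGroup X] [NormedSpace ℝ X]
    [NormedAddCommGroup Y] [NormedSpace ℝ Y]
    (β c C : ℝ) (hβ0 : 0 ≤ β) (hβ1 : β < 1) (hc : 0 < c) (hcC : c ≤ C)
    (S : X →ₗ[ℝ] Y)
    (hS : ∀ x : X, c * ‖x‖ ≤ ‖S x‖ ∧ ‖S x‖ ≤ C * ‖x‖) :
    ∀ x y : X, (∀ l : ℝ, ‖x + l • y‖ ≥ Real.sqrt (1 - β ^ 2) * ‖x‖) →
      ∀ l : ℝ, ‖S x + l • S y‖ ≥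
        Real.sqrt (1 - Real.sqrt (1 - (c / C) ^ 2 * (1 - β ^ 2)) ^ 2) * ‖S x‖ := by
  intro x y hxy l
  have hC : 0 < C := lt_of_lt_of_le hc hcC
  have hβ2 : 0 ≤ 1 - β ^ 2 := by nlinarith
  have hr : 0 ≤ (c / C) ^ 2 * (1 - β ^ 2) := by positivity
  have hr1 : (c / C) ^ 2 * (1 - β ^ 2) ≤ 1 := by
    have h1 : (c / C) ^ 2 ≤ 1 := by
      have : c / C ≤ 1 := (div_le_one hC).2 hcC
      nlinarith [div_pos hc hC]
    nlinarith
  have hsq : Real.sqrt (1 - (c / C) ^ 2 * (1 - β ^ 2)) ^ 2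
      = 1 - (c / C) ^ 2 * (1 - β ^ 2) := Real.sq_sqrt (by linarith)
  rw [hsq]
  have : (1 : ℝ) - (1 - (c / C) ^ 2 * (1 - β ^ 2)) = (c / C) ^ 2 * (1 - β ^ 2) := by ring
  rw [this, Real.sqrt_mul (by positivity), Real.sqrt_sq (by positivity)]
  -- goal: ‖S x + l • S y‖ ≥ (c / C) * √(1 - β²) * ‖S x‖
  have key : ‖S x + l • S y‖ = ‖S (x + l • y)‖ := by simp
  rw [key]
  have h1 : c * ‖x + l • y‖ ≤ ‖S (x + l • y)‖ := (hS _).1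
  have h2 : ‖S x‖ ≤ C * ‖x‖ := (hS x).2
  have h3 : Real.sqrt (1 - β ^ 2) * ‖x‖ ≤ ‖x + l • y‖ := hxy l
  have hs : 0 ≤ Real.sqrt (1 - β ^ 2) := Real.sqrt_nonneg _
  rw [ge_iff_le, div_mul_eq_mul_div, div_mul_eq_mul_div, div_le_iff₀ hC]
  calc c * Real.sqrt (1 - β ^ 2) * ‖S x‖
      ≤ c * Real.sqrt (1 - β ^ 2) * (C * ‖x‖) := by
        exact mul_le_mul_of_nonneg_left h2 (by positivity)
    _ = C * (c * (Real.sqrt (1 - β ^ 2) * ‖x‖)) := by ring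
    _ ≤ C * (c * ‖x + l • y‖) := by
        exact mul_le_mul_of_nonneg_left (mul_le_mul_of_nonneg_left h3 hc.le) hC.le
    _ ≤ C * ‖S (x + l • y)‖ := mul_le_mul_of_nonneg_left h1 hC.le
    _ = ‖S (x + l • y)‖ * C := mul_comm _ _
end

section
/- Let X be a finite-dimensional real Banach space with basis {x₁,…,xₙ} satisfying property (*): for each i, xᵢ ⊥_B span{x_j : j ≠ i}. Let Y be a normed linear space and T : X → Y linear with ‖T‖ = 1. Suppose for each i there is εᵢ ∈ [0,1) such that T is B D^{εᵢ}-preserving at xᵢ, and Txᵢ ≠ 0 for all i. Then T is injective. -/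
/-! If `T x = 0` with `x ≠ 0`, pick a coordinate `c = xᵢ ≠ 0`. Then `c⁻¹ • x = xᵢ + y` with `y` in the
span of the other basis vectors, so `xᵢ ⊥_B y` by property (*). Since `T` is `B D^εᵢ`-preserving at
`xᵢ`, `‖T xᵢ + T y‖ ≥ √(1 - εᵢ²) ‖T xᵢ‖ > 0`; but `T xᵢ + T y = c⁻¹ • T x = 0`. -/

open Submodule in
theorem Module.Basis.sub_repr_smul_mem_span_ne {ι R M : Type*} [Ring R] [AddCommGroup M]
    [Module R M] (b : Module.Basis ι R M) (x : M) (i : ι) :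
    x - b.repr x i • b i ∈ span R (Set.range fun j : {j : ι // j ≠ i} => b j) := by
  have hrange : (Set.range fun j : {j : ι // j ≠ i} => b j) = b '' {i}ᶜ := by
    ext; simp [eq_comm]
  rw [hrange, b.mem_span_image]
  intro j hj
  simp only [Set.mem_compl_iff, Set.mem_singleton_iff]
  rintro rfl
  simp at hj

theorem add_ne_zero_of_forall_norm_add_smul_ge {Y : Type*} [NormedAddCommGroup Y] [NormedSpace ℝ Y]
    {u v : Y} {ε : ℝ} (hε : ε ^ 2 < 1) (hu : u ≠ 0)
    (h : ∀ l : ℝ, ‖u + l • v‖ ≥ Real.sqrt (1 - ε ^ 2) * ‖u‖) : u + v ≠ 0 := by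
  intro huv
  have hle := h 1
  rw [one_smul, huv, norm_zero] at hle
  have hpos : 0 < Real.sqrt (1 - ε ^ 2) * ‖u‖ :=
    mul_pos (Real.sqrt_pos.2 (sub_pos.2 hε)) (norm_pos_iff.2 hu)
  linarith

theorem stmt_13_general {X Y : Type*} [NormedAddCommGroup X] [NormedSpace ℝ X]
    [NormedAddCommGroup Y] [NormedSpace ℝ Y]
    (n : ℕ) (b : Module.Basis (Fin n) ℝ X)
    (hstar : ∀ i : Fin n, ∀ m ∈ Submodule.span ℝ (Set.range fun j : {j : Fin n // j ≠ i} => b j),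
      ∀ l : ℝ, ‖b i + l • m‖ ≥ ‖b i‖)
    (T : X →L[ℝ] Y)
    (ε : Fin n → ℝ) (hε : ∀ i, 0 ≤ ε i ∧ ε i < 1)
    (hpres : ∀ i : Fin n, ∀ y : X, (∀ l : ℝ, ‖b i + l • y‖ ≥ ‖b i‖) →
      ∀ l : ℝ, ‖T (b i) + l • T y‖ ≥ Real.sqrt (1 - (ε i) ^ 2) * ‖T (b i)‖)
    (hTb : ∀ i, T (b i) ≠ 0) :
    Function.Injective T := by
  refine (injective_iff_map_eq_zero T).2 fun x hx => ?_
  by_contra hx0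
  obtain ⟨i, hc⟩ : ∃ i, b.repr x i ≠ 0 := by
    by_contra! h
    exact hx0 (b.repr.map_eq_zero_iff.1 (Finsupp.ext h))
  set c := b.repr x i
  set y := c⁻¹ • (x - c • b i) with hy_def
  have hy : y ∈ Submodule.span ℝ (Set.range fun j : {j : Fin n // j ≠ i} => b j) :=
    Submodule.smul_mem _ _ (b.sub_repr_smul_mem_span_ne x i)
  have hεi : ε i ^ 2 < 1 := pow_lt_one₀ (hε i).1 (hε i).2 two_ne_zero
  have hne := add_ne_zero_of_forall_norm_add_smul_ge hεi (hTb i) (hpres i y (hstar i y hy))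
  have hsum : b i + y = c⁻¹ • x := by
    rw [hy_def, smul_sub, smul_smul, inv_mul_cancel₀ hc, one_smul, add_sub_cancel]
  rw [← map_add, hsum, map_smul, hx, smul_zero] at hne
  exact hne rfl

theorem stmt_13 {X Y : Type*} [NormedAddCommGroup X] [NormedSpace ℝ X]
    [NormedAddCommGroup Y] [NormedSpace ℝ Y]
    [CompleteSpace X] [FiniteDimensional ℝ X]
    (n : ℕ) (b : Module.Basis (Fin n) ℝ X)
    (hstar : ∀ i : Fin n, ∀ m ∈ Submodule.span ℝ (Set.range fun j : {j : Fin n // j ≠ i} => b j),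
      ∀ l : ℝ, ‖b i + l • m‖ ≥ ‖b i‖)
    (T : X →L[ℝ] Y) (hTnorm : ‖T‖ = 1)
    (ε : Fin n → ℝ) (hε : ∀ i, 0 ≤ ε i ∧ ε i < 1)
    (hpres : ∀ i : Fin n, ∀ y : X, (∀ l : ℝ, ‖b i + l • y‖ ≥ ‖b i‖) →
      ∀ l : ℝ, ‖T (b i) + l • T y‖ ≥ Real.sqrt (1 - (ε i) ^ 2) * ‖T (b i)‖)
    (hTb : ∀ i, T (b i) ≠ 0) :
    Function.Injective T :=
  stmt_13_general n b hstar T ε hε hpres hTb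
end

section
/- Let Y be a real normed linear space, and let e₁,…,eₙ be the standard basis of ℓ₁ⁿ (ℝⁿ with the ℓ¹ norm). Let T : ℓ₁ⁿ → Y be linear with ‖T‖ = 1, and suppose for some index i and some ε ∈ [0,1), T is B D^ε-preserving at eᵢ and Teᵢ ≠ 0. Then Te_j ≠ 0 for all j. -/
lemma piLp_one_norm_eq {n : ℕ} (x : PiLp 1 (fun _ : Fin n => ℝ)) :
    ‖x‖ = ∑ k, |x k| := by
  rw [PiLp.norm_eq_sum (by norm_num : (0:ℝ) < (1 : ENNReal).toReal)]
  simp [Real.norm_eq_abs]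

theorem stmt_14 {Y : Type*} [NormedAddCommGroup Y] [NormedSpace ℝ Y]
    (n : ℕ) (T : PiLp 1 (fun _ : Fin n => ℝ) →L[ℝ] Y) (hTnorm : ‖T‖ = 1)
    (e : Fin n → PiLp 1 (fun _ : Fin n => ℝ))
    (he : ∀ i, e i = (WithLp.equiv 1 (Fin n → ℝ)).symm (Pi.single i 1))
    (i : Fin n) (ε : ℝ) (hε0 : 0 ≤ ε) (hε1 : ε < 1)
    (hpres : ∀ y, (∀ l : ℝ, ‖e i + l • y‖ ≥ ‖e i‖) →
      ∀ l : ℝ, ‖T (e i) + l • T y‖ ≥ Real.sqrt (1 - ε ^ 2) * ‖T (e i)‖)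
    (hTei : T (e i) ≠ 0) :
    ∀ j : Fin n, T (e j) ≠ 0 := by
  intro j hTej
  by_cases hij : j = i
  · exact hTei (hij ▸ hTej)
  have hnormi : ‖e i‖ = 1 := by
    rw [he i, piLp_one_norm_eq]
    simp [Pi.single_apply, Finset.sum_ite_eq', apply_ite abs]
  have horth : ∀ l : ℝ, ‖e i + l • (e i + e j)‖ ≥ ‖e i‖ := by
    intro l
    rw [hnormi, piLp_one_norm_eq]
    have h1 : |(e i + l • (e i + e j)) i| = |1 + l| := by
      simp [he, Pi.single_apply, hij]
    have h2 : |(e i + l • (e i + e j)) j| = |l| := by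
      simp [he, Pi.single_apply, hij]
    have hsub : ({i, j} : Finset (Fin n)) ⊆ Finset.univ := Finset.subset_univ _
    have hsum : ∑ k ∈ ({i, j} : Finset (Fin n)), |(e i + l • (e i + e j)) k|
        ≤ ∑ k, |(e i + l • (e i + e j)) k| :=
      Finset.sum_le_sum_of_subset_of_nonneg hsub (fun k _ _ => abs_nonneg _)
    rw [Finset.sum_pair (Ne.symm hij)] at hsum
    rw [h1, h2] at hsum
    have : (1 : ℝ) ≤ |1 + l| + |l| := by
      calc (1 : ℝ) = |1 + l + -l| := by ring_nf; simp
        _ ≤ |1 + l| + |-l| := abs_add_le _ _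
        _ = |1 + l| + |l| := by rw [abs_neg]
    linarith
  have key := hpres (e i + e j) horth (-1)
  rw [map_add, hTej, add_zero] at key
  simp only [neg_smul, one_smul, add_neg_cancel, norm_zero] at key
  have hpos : 0 < Real.sqrt (1 - ε ^ 2) * ‖T (e i)‖ := by
    apply mul_pos
    · apply Real.sqrt_pos.mpr; nlinarith
    · exact norm_pos_iff.mpr hTei
  linarith
end

section
/- Let x, y be unit vectors in a real normed space X. Then there exists α ∈ ℝ with 1/4 ≤ |α| ≤ 3/2 such that 3x + y ⊥_B (3x − α(3x + y)). -/
theorem stmt_16 {X : Type*} [NormedAddCommGroup X] [NormedSpace ℝ X]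
    (x y : X) (hx : ‖x‖ = 1) (hy : ‖y‖ = 1) :
    ∃ α : ℝ, 1/4 ≤ |α| ∧ |α| ≤ 3/2 ∧
      ∀ l : ℝ, ‖((3:ℝ) • x + y) + l • ((3:ℝ) • x - α • ((3:ℝ) • x + y))‖ ≥
        ‖(3:ℝ) • x + y‖ := by
  set u : X := (3:ℝ) • x + y with hu
  have hnorm3x : ‖(3:ℝ) • x‖ = 3 := by
    rw [norm_smul, hx]; norm_num
  have hlb : (2:ℝ) ≤ ‖u‖ := by
    have := norm_sub_norm_le ((3:ℝ) • x) (-y)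
    simp only [norm_neg, sub_neg_eq_add] at this
    rw [hnorm3x, hy] at this
    linarith
  have hub : ‖u‖ ≤ 4 := by
    have := norm_add_le ((3:ℝ) • x) y
    rw [hnorm3x, hy] at this
    linarith
  have hu0 : u ≠ 0 := by
    intro h; rw [h, norm_zero] at hlb; linarith
  obtain ⟨f, hf1, hfu⟩ := exists_dual_vector ℝ u (norm_ne_zero_iff.mpr hu0)
  simp only [RCLike.ofReal_real_eq_id, id] at hfu
  have hfy : f y ≤ 1 := by
    calc f y ≤ |f y| := le_abs_self _
    _ ≤ ‖f‖ * ‖y‖ := f.le_opNorm y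
    _ = 1 := by rw [hf1, hy]; ring
  have hf3x_lb : (1:ℝ) ≤ f ((3:ℝ) • x) := by
    have : f u = f ((3:ℝ) • x) + f y := by rw [hu, map_add]
    rw [hfu] at this
    linarith
  have hf3x_ub : f ((3:ℝ) • x) ≤ 3 := by
    calc f ((3:ℝ) • x) ≤ |f ((3:ℝ) • x)| := le_abs_self _
    _ ≤ ‖f‖ * ‖(3:ℝ) • x‖ := f.le_opNorm _
    _ = 3 := by rw [hf1, hnorm3x]; ring
  refine ⟨f ((3:ℝ) • x) / ‖u‖, ?_, ?_, ?_⟩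
  · rw [abs_div, abs_of_nonneg (by linarith : (0:ℝ) ≤ f ((3:ℝ) • x)),
      abs_of_nonneg (norm_nonneg u)]
    rw [le_div_iff₀ (by linarith)]
    linarith
  · rw [abs_div, abs_of_nonneg (by linarith : (0:ℝ) ≤ f ((3:ℝ) • x)),
      abs_of_nonneg (norm_nonneg u)]
    rw [div_le_iff₀ (by linarith)]
    linarith
  · intro l
    have hfv : f ((3:ℝ) • x - (f ((3:ℝ) • x) / ‖u‖) • u) = 0 := by
      simp only [map_sub, map_smul, smul_eq_mul, hfu]
      field_simp
      ring
    calc ‖u‖ = f u + l * f ((3:ℝ) • x - (f ((3:ℝ) • x) / ‖u‖) • u) := by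
          rw [hfu, hfv]; ring
    _ = f (u + l • ((3:ℝ) • x - (f ((3:ℝ) • x) / ‖u‖) • u)) := by
          simp only [map_add, map_sub, map_smul, smul_eq_mul]
    _ ≤ |f (u + l • ((3:ℝ) • x - (f ((3:ℝ) • x) / ‖u‖) • u))| := le_abs_self _
    _ ≤ ‖f‖ * ‖u + l • ((3:ℝ) • x - (f ((3:ℝ) • x) / ‖u‖) • u)‖ := f.le_opNorm _
    _ = ‖u + l • ((3:ℝ) • x - (f ((3:ℝ) • x) / ‖u‖) • u)‖ := by rw [hf1, one_mul]
end
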